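/- arXiv:2402.13099 — 2 statements merged into one kernel-verified Lean document; each statement's English description precedes it below -/
import Mathlib

section
/- Let I and J be finite categories. Any functor F : (J ⥤ FintypeCat) ⥤ (I ⥤ FintypeCat) that preserves finite colimits has a right adjoint (F is a left adjoint). -/
/-!
Every `X : J ⥤ FintypeCat` is the colimit of the corepresentables `Hom(j, -)` over its category
of elements, which is finite because `J` and all `X j` are. Hence for `F` preserving finite
colimits, `Hom(F X, A)` is the set of compatible families of maps `F Hom(j, -) ⟶ A` indexed by
the elements `x ∈ X j`, i.e. `Hom(X, R A)` with `R A j = Hom(F Hom(j, -), A)`; this is a finite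
set as soon as the target category has finite hom-sets, so `R` is a right adjoint of `F`.
-/

open CategoryTheory CategoryTheory.Limits Opposite

universe u

namespace CategoryTheory

instance Functor.finite_hom {C D : Type*} [Category C] [Category D] [Finite C]
    [∀ X Y : D, Finite (X ⟶ Y)] (F G : C ⥤ D) : Finite (F ⟶ G) :=
  Finite.of_injective (fun α => α.app) fun _ _ h => NatTrans.ext h

noncomputable instance CategoryOfElements.finCategory {C : Type u} [SmallCategory C]
    [FinCategory C] (F : C ⥤ Type u) [∀ c, Finite (F.obj c)] : FinCategory F.Elements where
  fintypeObj := Fintype.ofFinite (Σ c, F.obj c)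
  fintypeHom x y := Fintype.ofFinite {f : x.1 ⟶ y.1 // F.map f x.2 = y.2}

namespace FintypeCat

variable {J : Type u} [SmallCategory J] [FinCategory J]

variable (J) in
def coyoneda : Jᵒᵖ ⥤ J ⥤ FintypeCat.{u} where
  obj j :=
    { obj j' := FintypeCat.of (unop j ⟶ j')
      map g := FintypeCat.homMk (· ≫ g) }
  map f :=
    { app j' := FintypeCat.homMk (f.unop ≫ ·)
      naturality _ _ _ := by ext; exact (Category.assoc _ _ _).symm }

variable {X : J ⥤ FintypeCat.{u}}

instance finite_comp_incl_obj (j : J) : Finite ((X ⋙ FintypeCat.incl).obj j) :=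
  (X.obj j).property

def coyonedaHom {j : J} (x : X.obj j) : (coyoneda J).obj (op j) ⟶ X where
  app j' := FintypeCat.homMk fun h => X.map h x
  naturality _ _ g := by ext h; exact ConcreteCategory.congr_hom (X.map_comp h g) x

lemma coyonedaHom_app_id {j : J} (x : X.obj j) : (coyonedaHom x).app j (𝟙 j) = x :=
  ConcreteCategory.congr_hom (X.map_id j) x

lemma coyoneda_map_comp_coyonedaHom {j j' : J} (g : j ⟶ j') (x : X.obj j) :
    (coyoneda J).map g.op ≫ coyonedaHom x = coyonedaHom (X.map g x) := by
  ext j'' h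
  exact ConcreteCategory.congr_hom (X.map_comp g h) x

lemma coyonedaHom_comp {Y : J ⥤ FintypeCat.{u}} {j : J} (x : X.obj j) (f : X ⟶ Y) :
    coyonedaHom x ≫ f = coyonedaHom (f.app j x) := by
  ext j' h
  exact ConcreteCategory.congr_hom (f.naturality h) x

variable (X) in
def functorToCorepresentables : (X ⋙ FintypeCat.incl).Elementsᵒᵖ ⥤ J ⥤ FintypeCat.{u} :=
  (CategoryOfElements.π (X ⋙ FintypeCat.incl)).op ⋙ coyoneda J

variable (X) in
def coconeOfCorepresentable : Cocone (functorToCorepresentables X) where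
  pt := X
  ι :=
    { app e := coyonedaHom e.unop.2
      naturality e e' f := by
        refine ((coyoneda_map_comp_coyonedaHom f.unop.1 e'.unop.2).trans ?_).trans
          (Category.comp_id _).symm
        exact congrArg coyonedaHom f.unop.2 }

lemma coyoneda_map_comp_cocone_ι_app (s : Cocone (functorToCorepresentables X)) {j j' : J}
    (g : j ⟶ j') (x : X.obj j) :
    (coyoneda J).map g.op ≫ s.ι.app (op ((X ⋙ FintypeCat.incl).elementsMk j x)) =
      s.ι.app (op ((X ⋙ FintypeCat.incl).elementsMk j' (X.map g x))) :=
  s.w (CategoryOfElements.homMk ((X ⋙ FintypeCat.incl).elementsMk j x)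
    ((X ⋙ FintypeCat.incl).elementsMk j' (X.map g x)) g rfl).op

lemma cocone_ι_app_app (s : Cocone (functorToCorepresentables X)) {j j' : J} (x : X.obj j)
    (h : j ⟶ j') :
    (s.ι.app (op ((X ⋙ FintypeCat.incl).elementsMk j x))).app j' h =
      (s.ι.app (op ((X ⋙ FintypeCat.incl).elementsMk j' (X.map h x)))).app j' (𝟙 j') := by
  rw [← coyoneda_map_comp_cocone_ι_app s h x]
  exact congrArg _ (Category.comp_id h).symm

variable (X) in
def isColimitCoconeOfCorepresentable : IsColimit (coconeOfCorepresentable X) where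
  desc s :=
    { app j := FintypeCat.homMk fun x =>
        (s.ι.app (op ((X ⋙ FintypeCat.incl).elementsMk j x))).app j (𝟙 j)
      naturality j j' g := by
        refine FintypeCat.hom_ext _ _ fun (x : X.obj j) => ?_
        change
          (s.ι.app (op ((X ⋙ FintypeCat.incl).elementsMk j' (X.map g x)))).app j' (𝟙 j') =
            s.pt.map g ((s.ι.app (op ((X ⋙ FintypeCat.incl).elementsMk j x))).app j (𝟙 j))
        rw [← cocone_ι_app_app]
        exact (congrArg _ (Category.id_comp g).symm).trans
          (NatTrans.naturality_apply (s.ι.app (op ((X ⋙ FintypeCat.incl).elementsMk j x))) g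
            (𝟙 j)) }
  fac s e := by
    ext j h
    exact (cocone_ι_app_app s e.unop.2 h).symm
  uniq s m hm := by
    refine NatTrans.ext (funext fun j => FintypeCat.hom_ext _ _ fun (x : X.obj j) => ?_)
    exact (congrArg (m.app j) (coyonedaHom_app_id x).symm).trans
      (congrArg (fun φ => φ.app j (𝟙 j)) (hm (op ((X ⋙ FintypeCat.incl).elementsMk j x))))

variable {D : Type*} [Category.{u} D] [∀ A B : D, Finite (A ⟶ B)]
  (F : (J ⥤ FintypeCat.{u}) ⥤ D)

def rightAdjointObj (A : D) : J ⥤ FintypeCat.{u} :=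
  ObjectProperty.lift _ ((coyoneda J).rightOp ⋙ F.op ⋙ yoneda.obj A) fun _ =>
    inferInstanceAs (Finite (_ ⟶ A))

noncomputable def rightAdjointHomEquiv [PreservesFiniteColimits F] (X : J ⥤ FintypeCat.{u})
    (A : D) : (F.obj X ⟶ A) ≃ (X ⟶ rightAdjointObj F A) where
  toFun φ :=
    { app j := FintypeCat.homMk fun x => F.map (coyonedaHom x) ≫ φ
      naturality j j' g := by
        refine FintypeCat.hom_ext _ _ fun (x : X.obj j) => ?_
        change F.map (coyonedaHom (X.map g x)) ≫ φ =
          F.map ((coyoneda J).map g.op) ≫ F.map (coyonedaHom x) ≫ φ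
        rw [← coyoneda_map_comp_coyonedaHom, F.map_comp, Category.assoc] }
  invFun α := (isColimitOfPreserves F (isColimitCoconeOfCorepresentable X)).desc
    { pt := A
      ι :=
        { app e := α.app e.unop.1 e.unop.2
          naturality e e' f := by
            refine Eq.trans ?_ (Category.comp_id _).symm
            exact (NatTrans.naturality_apply α f.unop.1 e'.unop.2).symm.trans
              (congrArg (α.app _) f.unop.2) } }
  left_inv φ := (isColimitOfPreserves F (isColimitCoconeOfCorepresentable X)).hom_ext fun e =>
    (isColimitOfPreserves F (isColimitCoconeOfCorepresentable X)).fac _ e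
  right_inv α := NatTrans.ext <| funext fun j => FintypeCat.hom_ext _ _ fun x =>
    (isColimitOfPreserves F (isColimitCoconeOfCorepresentable X)).fac _
      (op ((X ⋙ FintypeCat.incl).elementsMk j x))

lemma rightAdjointHomEquiv_naturality_left [PreservesFiniteColimits F]
    {X X' : J ⥤ FintypeCat.{u}} {A : D} (f : X' ⟶ X) (φ : F.obj X ⟶ A) :
    rightAdjointHomEquiv F X' A (F.map f ≫ φ) = f ≫ rightAdjointHomEquiv F X A φ := by
  refine NatTrans.ext <| funext fun j => FintypeCat.hom_ext _ _ fun (x : X'.obj j) => ?_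
  change F.map (coyonedaHom x) ≫ F.map f ≫ φ = F.map (coyonedaHom (f.app j x)) ≫ φ
  rw [← coyonedaHom_comp, F.map_comp, Category.assoc]

theorem isLeftAdjoint_of_preservesFiniteColimits [PreservesFiniteColimits F] :
    F.IsLeftAdjoint :=
  (Adjunction.adjunctionOfEquivRight (rightAdjointHomEquiv F) fun _ _ _ =>
    rightAdjointHomEquiv_naturality_left F).isLeftAdjoint

end FintypeCat
end CategoryTheory

theorem stmt_5 (J I : Type u) [SmallCategory J] [FinCategory J] [SmallCategory I]
    [FinCategory I] (F : (J ⥤ FintypeCat.{u}) ⥤ (I ⥤ FintypeCat.{u}))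
    [PreservesFiniteColimits F] : F.IsLeftAdjoint :=
  FintypeCat.isLeftAdjoint_of_preservesFiniteColimits F
end

section
/- Let Q, R, P be finite idempotent-complete categories, A : Q ⥤ P an open functor, and B : R ⥤ P any functor. Let W be the full subcategory of the comma category Comma A B consisting of those objects whose structural morphism A.obj q ⟶ B.obj r is an isomorphism (the iso-comma category, i.e. the pseudo-pullback of A and B), and let C : W ⥤ R be the evident projection functor. Then C is open. -/
/-! Openness of `A` turns a morphism `g : A q ⟶ b` into a retraction `ρ : A y ⟶ b` through
which `g` factors as `A.map u ≫ ρ`, and this can be repeated from `ρ`. By finiteness the process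
returns to a state it has visited, giving `t : y ⟶ y` with `A.map t = ρ ≫ σ` for a section `σ`
of `ρ`. Some power of `t` is idempotent and still maps to `ρ ≫ σ`; its splitting `z` in `Q`
satisfies `A z ≅ b`, compatibly with `g`. For `g = α ≫ B.map f` this produces an object of the
iso-comma category over `a` receiving a morphism over `f`, so `C` is open with `s = r = 𝟙 a`. -/

open CategoryTheory

universe u

/-- A functor `A : I ⥤ J` is open if for every `x : I`, every `a : J` and every
`f : A.obj x ⟶ a`, there exist `y : I`, `u : x ⟶ y` and morphisms `s : a ⟶ A.obj y`,
`r : A.obj y ⟶ a` such that `s ≫ r = 𝟙 a` and `f ≫ s = A.map u`. -/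
def IsOpenFunctor {I J : Type*} [Category I] [Category J] (A : I ⥤ J) : Prop :=
  ∀ (x : I) (a : J) (f : A.obj x ⟶ a),
    ∃ (y : I) (u : x ⟶ y) (s : a ⟶ A.obj y) (r : A.obj y ⟶ a),
      s ≫ r = 𝟙 a ∧ f ≫ s = A.map u

theorem Finite.exists_rel_self_of_trans {α : Type*} [Finite α] {r : α → α → Prop} [IsTrans α r]
    (hsucc : ∀ a, ∃ b, r a b) (a : α) : ∃ b, r a b ∧ r b b := by
  by_contra! hirr
  -- `r` would be a strict order on the successors of `a` without a maximal element
  let s : α → α → Prop := fun x y => r a y ∧ r y x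
  have : IsTrans α s := ⟨fun _ _ _ hxy hyz => ⟨hyz.1, _root_.trans hyz.2 hxy.2⟩⟩
  have : Std.Irrefl s := ⟨fun x hx => hirr x hx.1 hx.2⟩
  obtain ⟨m, ham, hmin⟩ := (Finite.wellFounded_of_trans_of_irrefl s).has_min {y | r a y} (hsucc a)
  obtain ⟨b, hmb⟩ := hsucc m
  exact hmin b (_root_.trans ham hmb) ⟨ham, hmb⟩

theorem exists_pow_isIdempotentElem {M : Type*} [Monoid M] [Finite M] (x : M) :
    ∃ n ≠ 0, IsIdempotentElem (x ^ n) := by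
  obtain ⟨i, j, hij, hx⟩ : ∃ i j, i < j ∧ x ^ i = x ^ j := by
    obtain ⟨i, j, hne, h⟩ := Finite.exists_ne_map_eq_of_infinite (x ^ · : ℕ → M)
    rcases hne.lt_or_gt with hlt | hlt
    exacts [⟨i, j, hlt, h⟩, ⟨j, i, hlt, h.symm⟩]
  obtain ⟨d, rfl⟩ := Nat.exists_eq_add_of_lt hij
  have periodic : ∀ k, x ^ (i + k * (d + 1)) = x ^ i := by
    intro k
    induction k with
    | zero => simp
    | succ k ih =>
      rw [show i + (k + 1) * (d + 1) = i + d + 1 + k * (d + 1) by ring, pow_add, ← hx,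
        ← pow_add, ih]
  -- a multiple of the period `d + 1` that is at least `i`
  refine ⟨(i + 1) * (d + 1), by positivity, ?_⟩
  obtain ⟨m, hm⟩ : ∃ m, (i + 1) * (d + 1) = i + m := ⟨i * d + d + 1, by ring⟩
  calc x ^ ((i + 1) * (d + 1)) * x ^ ((i + 1) * (d + 1))
      = x ^ (i + (i + 1) * (d + 1)) * x ^ m := by
        rw [← pow_add, ← pow_add]; congr 1; linarith
    _ = x ^ ((i + 1) * (d + 1)) := by rw [periodic, ← pow_add, hm]

theorem CategoryTheory.Retract.isIso_i_comp_r {C : Type*} [Category C] {X₁ X₂ Y : C}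
    (h₁ : Retract X₁ Y) (h₂ : Retract X₂ Y) (h : h₁.r ≫ h₁.i = h₂.r ≫ h₂.i) :
    IsIso (h₁.i ≫ h₂.r) :=
  ⟨h₂.i ≫ h₁.r, by simp [← reassoc_of% h], by simp [reassoc_of% h]⟩

section

variable {Q P : Type*} [Category Q] [Category P] (A : Q ⥤ P) (b : P)

def RetractRefines (p p' : Σ y : Q, A.obj y ⟶ b) : Prop :=
  ∃ (u : p.1 ⟶ p'.1) (s : b ⟶ A.obj p'.1), s ≫ p'.2 = 𝟙 b ∧ p.2 ≫ s = A.map u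

instance : IsTrans (Σ y : Q, A.obj y ⟶ b) (RetractRefines A b) where
  trans _ p' _ := fun ⟨u, s, hs, hu⟩ ⟨u', s', hs', hu'⟩ =>
    ⟨u ≫ u', s', hs', by rw [A.map_comp, ← hu, ← hu', Category.assoc, reassoc_of% hs]⟩

variable {A b}

theorem IsOpenFunctor.exists_retractRefines (hA : IsOpenFunctor A) (p : Σ y : Q, A.obj y ⟶ b) :
    ∃ p', RetractRefines A b p p' :=
  let ⟨y, u, s, r, hsr, hu⟩ := hA p.1 b p.2
  ⟨⟨y, r⟩, u, s, hsr, hu⟩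

theorem IsOpenFunctor.exists_isIso_map_comp_eq (hA : IsOpenFunctor A) [IsIdempotentComplete Q]
    [Finite Q] [∀ X Y : Q, Finite (X ⟶ Y)] [∀ X Y : P, Finite (X ⟶ Y)] {q : Q} (g : A.obj q ⟶ b) :
    ∃ (z : Q) (w : q ⟶ z) (β : A.obj z ⟶ b), IsIso β ∧ A.map w ≫ β = g := by
  obtain ⟨⟨y, ρ⟩, ⟨c, s, hsρ, hc⟩, ⟨t, σ, hσρ, ht⟩⟩ :=
    Finite.exists_rel_self_of_trans hA.exists_retractRefines ⟨q, g⟩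
  dsimp only at c s hsρ hc t σ hσρ ht
  have : Finite (End y) := inferInstanceAs (Finite (y ⟶ y))
  obtain ⟨n, hn, he⟩ := exists_pow_isIdempotentElem (M := End y) t
  have hρσ : IsIdempotentElem (M := End (A.obj y)) (ρ ≫ σ) := by
    rw [IsIdempotentElem, End.mul_def, Category.assoc, reassoc_of% hσρ]
  obtain ⟨z, ι, π, hιπ, hπι⟩ := IsIdempotentComplete.idempotents_split y _ he
  -- `A.map t = ρ ≫ σ` is idempotent, hence equal to its `n`-th power
  have hAe : A.map (π ≫ ι) = ρ ≫ σ := by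
    rw [hπι, ← hρσ.pow_eq hn, ht]
    exact map_pow (A.mapEnd y) (show End y from t) n
  refine ⟨z, c ≫ π, A.map ι ≫ ρ,
    Retract.isIso_i_comp_r (Retract.map ⟨ι, π, hιπ⟩ A) ⟨σ, ρ, hσρ⟩ ?_, ?_⟩
  · simp [Retract.map, ← A.map_comp, hAe]
  · rw [A.map_comp, Category.assoc, ← A.map_comp_assoc π ι, hAe, Category.assoc, hσρ,
      Category.comp_id, ← hc, Category.assoc, hsρ, Category.comp_id]

end

theorem stmt_11_general (Q R P : Type u)
    [SmallCategory Q] [FinCategory Q] [IsIdempotentComplete Q]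
    [SmallCategory R]
    [SmallCategory P] [FinCategory P]
    (A : Q ⥤ P) (hA : IsOpenFunctor A) (B : R ⥤ P) :
    IsOpenFunctor ((ObjectProperty.ι (fun c : Comma A B => IsIso c.hom)) ⋙
      Comma.snd A B) := by
  intro x a f
  obtain ⟨z, w, β, hβ, hw⟩ := hA.exists_isIso_map_comp_eq (x.obj.hom ≫ B.map f)
  exact ⟨⟨Comma.mk z a β, hβ⟩, ObjectProperty.homMk ⟨w, f, hw⟩, 𝟙 a, 𝟙 a,
    Category.id_comp _, Category.comp_id _⟩

theorem stmt_11 (Q R P : Type u)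
    [SmallCategory Q] [FinCategory Q] [IsIdempotentComplete Q]
    [SmallCategory R] [FinCategory R] [IsIdempotentComplete R]
    [SmallCategory P] [FinCategory P] [IsIdempotentComplete P]
    (A : Q ⥤ P) (hA : IsOpenFunctor A) (B : R ⥤ P) :
    IsOpenFunctor ((ObjectProperty.ι (fun c : Comma A B => IsIso c.hom)) ⋙
      Comma.snd A B) :=
  stmt_11_general Q R P A hA B
end
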